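/- arXiv:2208.14517 — 8 statements merged into one kernel-verified Lean document; each statement's English description precedes it below -/
import Mathlib

section
/- Let (X, 𝒜, μ) be a measure space and p ∈ [1, ∞). The p-modulus Mod_p is an outer measure on families of measures on (X, 𝒜): Mod_p(∅) = 0; if Σ ⊆ Σ' are families of measures then Mod_p(Σ) ≤ Mod_p(Σ'); and for every countable collection (Σ_i)_{i∈ℕ} of families of measures, Mod_p(⋃_{i∈ℕ} Σ_i) ≤ Σ_{i∈ℕ} Mod_p(Σ_i). -/
open MeasureTheory ENNReal

/-- The `p`-modulus of a family `S` of measures on a measurable space `X`, with respect to a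
base measure `μ`: the infimum of `∫ f^p dμ` over all measurable `f : X → [0,∞]` that are
admissible for `S`, i.e. `∫ f dν ≥ 1` for every `ν ∈ S`. -/
noncomputable def pModulus {X : Type*} [MeasurableSpace X] (p : ℝ) (μ : MeasureTheory.Measure X)
    (S : Set (MeasureTheory.Measure X)) : ℝ≥0∞ :=
  ⨅ (f : X → ℝ≥0∞) (_ : Measurable f ∧ ∀ ν ∈ S, 1 ≤ ∫⁻ x, f x ∂ν),
    ∫⁻ x, f x ^ p ∂μ

/-- The p-modulus is an outer measure on families of measures: it vanishes on the empty
family, is monotone, and is countably subadditive. -/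
theorem mod_isOuterMeasure {X : Type*} [MeasurableSpace X] (p : ℝ) (hp : 1 ≤ p)
    (μ : MeasureTheory.Measure X) :
    pModulus p μ (∅ : Set (MeasureTheory.Measure X)) = 0 ∧
    (∀ S S' : Set (MeasureTheory.Measure X), S ⊆ S' → pModulus p μ S ≤ pModulus p μ S') ∧
    (∀ S : ℕ → Set (MeasureTheory.Measure X),
      pModulus p μ (⋃ i, S i) ≤ ∑' i, pModulus p μ (S i)) := by
  have hp0 : (0:ℝ) < p := by linarith
  have hinv : ∀ a : ℝ≥0∞, (a ^ p) ^ (1/p) = a := fun a => by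
    rw [← ENNReal.rpow_mul, mul_one_div_cancel hp0.ne', ENNReal.rpow_one]
  have hinv' : ∀ a : ℝ≥0∞, (a ^ (1/p)) ^ p = a := fun a => by
    rw [← ENNReal.rpow_mul, one_div_mul_cancel hp0.ne', ENNReal.rpow_one]
  refine ⟨?_, ?_, ?_⟩
  · refine le_antisymm ?_ zero_le
    have h : pModulus p μ ∅ ≤ ∫⁻ _, (0:ℝ≥0∞) ^ p ∂μ :=
      iInf₂_le (fun _ => (0:ℝ≥0∞))
        ⟨measurable_const, fun ν hν => absurd hν (Set.notMem_empty ν)⟩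
    simpa [ENNReal.zero_rpow_of_pos hp0] using h
  · intro S S' hSS'
    exact le_iInf₂ fun f hf => iInf₂_le f ⟨hf.1, fun ν hν => hf.2 ν (hSS' hν)⟩
  · intro S
    by_cases htop : ∑' i, pModulus p μ (S i) = ∞
    · simp [htop]
    have hfin : ∀ i, pModulus p μ (S i) ≠ ∞ :=
      fun i => ne_top_of_le_ne_top htop (ENNReal.le_tsum i)
    refine ENNReal.le_of_forall_pos_le_add fun ε hε _ => ?_
    obtain ⟨ε', hε'pos, c, hc, hcε⟩ := NNReal.exists_pos_sum_of_countable hε.ne' ℕ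
    -- choose near-optimal admissible functions
    have hchoice : ∀ i, ∃ f : X → ℝ≥0∞,
        (Measurable f ∧ ∀ ν ∈ S i, 1 ≤ ∫⁻ x, f x ∂ν) ∧
        ∫⁻ x, f x ^ p ∂μ ≤ pModulus p μ (S i) + ε' i := by
      intro i
      have hlt : pModulus p μ (S i) < pModulus p μ (S i) + ε' i :=
        ENNReal.lt_add_right (hfin i) (by exact_mod_cast (hε'pos i).ne')
      obtain ⟨f, hf⟩ := iInf_lt_iff.mp hlt
      obtain ⟨hfa, hflt⟩ := iInf_lt_iff.mp hf
      exact ⟨f, hfa, hflt.le⟩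
    choose f hf hfint using hchoice
    set g : X → ℝ≥0∞ := fun x => (∑' i, f i x ^ p) ^ (1/p) with hg
    have hgmeas : Measurable g :=
      (Measurable.ennreal_tsum fun i => (hf i).1.pow_const p).pow_const _
    have hgadm : ∀ ν ∈ ⋃ i, S i, 1 ≤ ∫⁻ x, g x ∂ν := by
      intro ν hν
      obtain ⟨i, hi⟩ := Set.mem_iUnion.mp hν
      refine le_trans ((hf i).2 ν hi) (lintegral_mono fun x => ?_)
      calc f i x = (f i x ^ p) ^ (1/p) := (hinv _).symm
        _ ≤ g x := ENNReal.rpow_le_rpow (ENNReal.le_tsum i) (by positivity)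
    have hgp : ∀ x, g x ^ p = ∑' i, f i x ^ p := fun x => hinv' _
    have key : ∫⁻ x, g x ^ p ∂μ ≤ ∑' i, pModulus p μ (S i) + ε := by
      calc ∫⁻ x, g x ^ p ∂μ = ∫⁻ x, ∑' i, f i x ^ p ∂μ := by simp_rw [hgp]
        _ = ∑' i, ∫⁻ x, f i x ^ p ∂μ :=
            lintegral_tsum fun i => ((hf i).1.pow_const p).aemeasurable
        _ ≤ ∑' i, (pModulus p μ (S i) + (ε' i : ℝ≥0∞)) := ENNReal.tsum_le_tsum hfint
        _ = ∑' i, pModulus p μ (S i) + ∑' i, (ε' i : ℝ≥0∞) := ENNReal.tsum_add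
        _ ≤ ∑' i, pModulus p μ (S i) + ε := by
            gcongr
            rw [← ENNReal.coe_tsum hc.summable, hc.tsum_eq]
            exact_mod_cast hcε.le
    exact le_trans (iInf₂_le g ⟨hgmeas, hgadm⟩) key
end

section
/- Let (X, 𝒜, μ) be a measure space, p ∈ [1, ∞), and let f : X → ℝ be measurable with ∫_X |f|^p dμ < ∞. Then the family of all measures ν on (X, 𝒜) for which ∫_X |f| dν = ∞ is p-exceptional; that is, f ∈ L^1(ν) for p-a.e. measure ν on (X, 𝒜). -/
open MeasureTheory ENNReal

/-- If `f ∈ L^p(μ)`, then `f ∈ L^1(ν)` for `p`-a.e. measure `ν`: the family of measures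
over which `|f|` has infinite integral is `p`-exceptional. -/
theorem pModulus_integrable_ae {X : Type*} [MeasurableSpace X] (p : ℝ) (hp : 1 ≤ p)
    (μ : MeasureTheory.Measure X) (f : X → ℝ) (hf : Measurable f)
    (hfLp : ∫⁻ x, ENNReal.ofReal |f x| ^ p ∂μ < ⊤) :
    pModulus p μ {ν : MeasureTheory.Measure X | ∫⁻ x, ENNReal.ofReal |f x| ∂ν = ⊤} = 0 := by
  set C : ℝ≥0∞ := ∫⁻ x, ENNReal.ofReal |f x| ^ p ∂μ with hC
  have hmeas : Measurable fun x => ENNReal.ofReal |f x| :=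
    (measurable_ofReal.comp hf.abs)
  -- bound: pModulus ≤ ((n+1 : ℕ))⁻¹ * C for all n
  have hbound : ∀ n : ℕ,
      pModulus p μ {ν : MeasureTheory.Measure X | ∫⁻ x, ENNReal.ofReal |f x| ∂ν = ⊤}
        ≤ (((n+1 : ℕ) : ℝ≥0∞))⁻¹ * C := by
    intro n
    set c : ℝ≥0∞ := (((n+1 : ℕ) : ℝ≥0∞))⁻¹ with hc
    have hc0 : c ≠ 0 := by
      simp [hc]
    have hcle : c ≤ 1 := by
      simp [hc]
    have hadm : ∀ ν ∈ {ν : MeasureTheory.Measure X | ∫⁻ x, ENNReal.ofReal |f x| ∂ν = ⊤},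
        1 ≤ ∫⁻ x, c * ENNReal.ofReal |f x| ∂ν := by
      intro ν hν
      rw [lintegral_const_mul c hmeas, hν, ENNReal.mul_top hc0]
      exact le_top
    have h1 : pModulus p μ {ν : MeasureTheory.Measure X | ∫⁻ x, ENNReal.ofReal |f x| ∂ν = ⊤}
        ≤ ∫⁻ x, (c * ENNReal.ofReal |f x|) ^ p ∂μ := by
      refine iInf₂_le (fun x => c * ENNReal.ofReal |f x|) ?_
      exact ⟨(measurable_const.mul hmeas), hadm⟩
    calc pModulus p μ {ν : MeasureTheory.Measure X | ∫⁻ x, ENNReal.ofReal |f x| ∂ν = ⊤}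
        ≤ ∫⁻ x, (c * ENNReal.ofReal |f x|) ^ p ∂μ := h1
      _ = c ^ p * C := by
          rw [hC, ← lintegral_const_mul (c ^ p) (hmeas.pow_const p)]
          congr 1
          funext x
          rw [ENNReal.mul_rpow_of_nonneg _ _ (le_trans zero_le_one hp)]
      _ ≤ c * C := by
          gcongr
          calc c ^ p ≤ c ^ (1 : ℝ) := ENNReal.rpow_le_rpow_of_exponent_ge hcle hp
            _ = c := ENNReal.rpow_one c
  -- take limit
  have htend : Filter.Tendsto (fun n : ℕ => (((n+1 : ℕ) : ℝ≥0∞))⁻¹ * C) Filter.atTop (nhds 0) := by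
    have h0 : Filter.Tendsto (fun n : ℕ => (((n+1 : ℕ) : ℝ≥0∞))⁻¹) Filter.atTop (nhds 0) :=
      ENNReal.tendsto_inv_nat_nhds_zero.comp (Filter.tendsto_add_atTop_nat 1)
    simpa using ENNReal.Tendsto.mul_const h0 (Or.inr hfLp.ne)
  have := ge_of_tendsto' htend hbound
  exact le_antisymm this zero_le
end

section
/- Let (X, 𝒜, μ) be a measure space, p ∈ [1, ∞), and let f, f_1, f_2, … : X → ℝ be measurable functions with ∫_X |f_i − f|^p dμ → 0 as i → ∞. Then there exists a subsequence (f_{i_j})_j such that the family of all measures ν on (X, 𝒜) for which ∫_X |f_{i_j} − f| dν does not converge to 0 as j → ∞ is p-exceptional; that is, f_{i_j} → f in L^1(ν) for p-a.e. measure ν on (X, 𝒜). -/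
open MeasureTheory ENNReal Filter

/-- If `f_i → f` in `L^p(μ)`, then some subsequence `f_{i_j}` converges to `f` in `L^1(ν)`
for `p`-a.e. measure `ν`. -/
theorem pModulus_subseq_L1_conv {X : Type*} [MeasurableSpace X] (p : ℝ) (hp : 1 ≤ p)
    (μ : MeasureTheory.Measure X) (f : X → ℝ) (fi : ℕ → X → ℝ)
    (hf : Measurable f) (hfi : ∀ i, Measurable (fi i))
    (hconv : Filter.Tendsto (fun i => ∫⁻ x, ENNReal.ofReal |fi i x - f x| ^ p ∂μ)
      Filter.atTop (nhds 0)) :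
    ∃ φ : ℕ → ℕ, StrictMono φ ∧
      pModulus p μ {ν : MeasureTheory.Measure X |
        ¬ Filter.Tendsto (fun j => ∫⁻ x, ENNReal.ofReal |fi (φ j) x - f x| ∂ν)
            Filter.atTop (nhds 0)} = 0 := by
  have hp0 : (0:ℝ) < p := lt_of_lt_of_le one_pos hp
  have hp0' : p ≠ 0 := ne_of_gt hp0
  -- extract a rapidly converging subsequence
  have hev : ∀ n : ℕ, ∃ N, ∀ k ≥ N,
      (∫⁻ x, ENNReal.ofReal |fi k x - f x| ^ p ∂μ) ≤ (2:ℝ≥0∞) ^ (-(4 * (n:ℝ) * p)) := by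
    intro n
    have hpos : (0:ℝ≥0∞) < (2:ℝ≥0∞) ^ (-(4 * (n:ℝ) * p)) :=
      ENNReal.rpow_pos (by norm_num) (by norm_num)
    obtain ⟨N, hN⟩ := Filter.eventually_atTop.mp (hconv.eventually_lt_const hpos)
    exact ⟨N, fun k hk => (hN k hk).le⟩
  obtain ⟨φ, hφ, hφ2⟩ := Filter.extraction_forall_of_eventually' hev
  refine ⟨φ, hφ, ?_⟩
  set a : ℕ → X → ℝ≥0∞ := fun j x => ENNReal.ofReal |fi (φ j) x - f x| with ha_def
  have ha : ∀ j, Measurable (a j) := fun j =>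
    (((hfi (φ j)).sub hf).abs).ennreal_ofReal
  have hint : ∀ j : ℕ, (∫⁻ x, a j x ^ p ∂μ) ≤ (2:ℝ≥0∞) ^ (-(4 * (j:ℝ) * p)) := fun j =>
    hφ2 j
  -- the gauge function
  set g : X → ℝ≥0∞ := fun x => ∑' j : ℕ, (2:ℝ≥0∞) ^ (j:ℝ) * a j x with hg_def
  have hg : Measurable g := Measurable.ennreal_tsum fun j => (measurable_const.mul (ha j))
  -- geometric sums
  have hc4 : (∑' j : ℕ, (2:ℝ≥0∞) ^ (-(2 * (j:ℝ)))) ≠ ⊤ := by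
    have : ∀ j : ℕ, (2:ℝ≥0∞) ^ (-(2 * (j:ℝ))) = (4⁻¹ : ℝ≥0∞) ^ j := by
      intro j
      rw [ENNReal.rpow_neg, ENNReal.rpow_mul, ← ENNReal.inv_pow]
      norm_num [ENNReal.rpow_natCast]
    rw [tsum_congr this, ENNReal.tsum_geometric]
    simp [ENNReal.inv_ne_top, tsub_eq_zero_iff_le]
  have hc2 : (∑' j : ℕ, (2:ℝ≥0∞) ^ (-(j:ℝ))) ≠ ⊤ := by
    have : ∀ j : ℕ, (2:ℝ≥0∞) ^ (-(j:ℝ)) = (2⁻¹ : ℝ≥0∞) ^ j := by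
      intro j
      rw [ENNReal.rpow_neg, ← ENNReal.inv_pow, ENNReal.rpow_natCast]
    rw [tsum_congr this, ENNReal.tsum_geometric]
    simp [ENNReal.inv_ne_top, tsub_eq_zero_iff_le]
  set c : ℝ≥0∞ := ∑' j : ℕ, (2:ℝ≥0∞) ^ (-(2 * (j:ℝ))) with hc_def
  -- pointwise bound : g x ^ p ≤ c ^ p * ∑' j, (2^(3j) a j x)^p
  have hpoint : ∀ x, g x ^ p ≤ c ^ p * ∑' j : ℕ, ((2:ℝ≥0∞) ^ (3 * (j:ℝ)) * a j x) ^ p := by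
    intro x
    set S : ℝ≥0∞ := ∑' j : ℕ, ((2:ℝ≥0∞) ^ (3 * (j:ℝ)) * a j x) ^ p with hS_def
    have hb : ∀ j : ℕ, (2:ℝ≥0∞) ^ (3 * (j:ℝ)) * a j x ≤ S ^ p⁻¹ := by
      intro j
      have h1 : ((2:ℝ≥0∞) ^ (3 * (j:ℝ)) * a j x) ^ p ≤ S := ENNReal.le_tsum j
      have := ENNReal.rpow_le_rpow h1 (inv_nonneg.mpr hp0.le)
      rwa [ENNReal.rpow_rpow_inv hp0'] at this
    have hgle : g x ≤ c * S ^ p⁻¹ := by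
      have hterm : ∀ j : ℕ, (2:ℝ≥0∞) ^ (j:ℝ) * a j x
          = (2:ℝ≥0∞) ^ (-(2 * (j:ℝ))) * ((2:ℝ≥0∞) ^ (3 * (j:ℝ)) * a j x) := by
        intro j
        rw [← mul_assoc, ← ENNReal.rpow_add _ _ (by norm_num) (by norm_num)]
        ring_nf
      calc g x = ∑' j : ℕ, (2:ℝ≥0∞) ^ (-(2 * (j:ℝ))) * ((2:ℝ≥0∞) ^ (3 * (j:ℝ)) * a j x) := by
            rw [hg_def]; exact tsum_congr hterm
        _ ≤ ∑' j : ℕ, (2:ℝ≥0∞) ^ (-(2 * (j:ℝ))) * S ^ p⁻¹ :=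
            ENNReal.tsum_le_tsum fun j => mul_le_mul_right (hb j) _
        _ = c * S ^ p⁻¹ := by rw [ENNReal.tsum_mul_right]
    calc g x ^ p ≤ (c * S ^ p⁻¹) ^ p := ENNReal.rpow_le_rpow hgle hp0.le
      _ = c ^ p * S := by
          rw [ENNReal.mul_rpow_of_nonneg _ _ hp0.le, ENNReal.rpow_inv_rpow hp0']
  -- integral bound
  have hsum_int : (∑' j : ℕ, ∫⁻ x, ((2:ℝ≥0∞) ^ (3 * (j:ℝ)) * a j x) ^ p ∂μ)
      ≤ ∑' j : ℕ, (2:ℝ≥0∞) ^ (-(j:ℝ)) := by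
    refine ENNReal.tsum_le_tsum fun j => ?_
    have h1 : (∫⁻ x, ((2:ℝ≥0∞) ^ (3 * (j:ℝ)) * a j x) ^ p ∂μ)
        = (2:ℝ≥0∞) ^ (3 * (j:ℝ) * p) * ∫⁻ x, a j x ^ p ∂μ := by
      simp_rw [ENNReal.mul_rpow_of_nonneg _ _ hp0.le, ← ENNReal.rpow_mul]
      rw [lintegral_const_mul _ ((ha j).pow_const p)]
    rw [h1]
    calc (2:ℝ≥0∞) ^ (3 * (j:ℝ) * p) * ∫⁻ x, a j x ^ p ∂μ
        ≤ (2:ℝ≥0∞) ^ (3 * (j:ℝ) * p) * (2:ℝ≥0∞) ^ (-(4 * (j:ℝ) * p)) :=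
          mul_le_mul_right (hint j) _
      _ = (2:ℝ≥0∞) ^ (3 * (j:ℝ) * p + -(4 * (j:ℝ) * p)) := by
          rw [ENNReal.rpow_add _ _ (by norm_num) (by norm_num)]
      _ = (2:ℝ≥0∞) ^ (-((j:ℝ) * p)) := by ring_nf
      _ ≤ (2:ℝ≥0∞) ^ (-(j:ℝ)) := by
          apply ENNReal.rpow_le_rpow_of_exponent_le one_le_two
          have : (j:ℝ) ≤ (j:ℝ) * p := le_mul_of_one_le_right (Nat.cast_nonneg j) hp
          linarith
  have hCfin : (∫⁻ x, g x ^ p ∂μ) ≠ ⊤ := by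
    have hSm : Measurable fun x => ∑' j : ℕ, ((2:ℝ≥0∞) ^ (3 * (j:ℝ)) * a j x) ^ p :=
      Measurable.ennreal_tsum fun j => (measurable_const.mul (ha j)).pow_const p
    have h1 : (∫⁻ x, g x ^ p ∂μ)
        ≤ c ^ p * ∫⁻ x, ∑' j : ℕ, ((2:ℝ≥0∞) ^ (3 * (j:ℝ)) * a j x) ^ p ∂μ := by
      calc (∫⁻ x, g x ^ p ∂μ)
          ≤ ∫⁻ x, c ^ p * ∑' j : ℕ, ((2:ℝ≥0∞) ^ (3 * (j:ℝ)) * a j x) ^ p ∂μ :=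
            lintegral_mono hpoint
        _ = c ^ p * ∫⁻ x, ∑' j : ℕ, ((2:ℝ≥0∞) ^ (3 * (j:ℝ)) * a j x) ^ p ∂μ :=
            lintegral_const_mul _ hSm
    have h2 : (∫⁻ x, ∑' j : ℕ, ((2:ℝ≥0∞) ^ (3 * (j:ℝ)) * a j x) ^ p ∂μ)
        = ∑' j : ℕ, ∫⁻ x, ((2:ℝ≥0∞) ^ (3 * (j:ℝ)) * a j x) ^ p ∂μ :=
      lintegral_tsum fun j => ((measurable_const.mul (ha j)).pow_const p).aemeasurable
    rw [h2] at h1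
    have h3 : (∫⁻ x, g x ^ p ∂μ) ≤ c ^ p * ∑' j : ℕ, (2:ℝ≥0∞) ^ (-(j:ℝ)) :=
      h1.trans (mul_le_mul_right hsum_int _)
    exact ne_top_of_le_ne_top
      (ENNReal.mul_ne_top (ENNReal.rpow_ne_top_of_nonneg hp0.le hc4) hc2) h3
  -- divergence on the bad set
  have hdiv : ∀ ν : Measure X,
      ¬ Tendsto (fun j => ∫⁻ x, a j x ∂ν) atTop (nhds 0) → (∫⁻ x, g x ∂ν) = ⊤ := by
    intro ν hν
    have hrepr : (∫⁻ x, g x ∂ν) = ∑' j : ℕ, (2:ℝ≥0∞) ^ (j:ℝ) * ∫⁻ x, a j x ∂ν := by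
      rw [hg_def, lintegral_tsum (f := fun (j : ℕ) x => (2:ℝ≥0∞) ^ (j:ℝ) * a j x) fun j => (measurable_const.mul (ha j)).aemeasurable]
      exact tsum_congr fun j => lintegral_const_mul _ (ha j)
    by_contra hne
    rw [hrepr] at hne
    have hto := ENNReal.tendsto_atTop_zero_of_tsum_ne_top hne
    apply hν
    refine tendsto_of_tendsto_of_tendsto_of_le_of_le tendsto_const_nhds hto
      (fun j => zero_le) (fun j => ?_)
    refine le_mul_of_one_le_left zero_le ?_
    calc (1:ℝ≥0∞) = (2:ℝ≥0∞) ^ (0:ℝ) := (ENNReal.rpow_zero (x := 2)).symm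
      _ ≤ (2:ℝ≥0∞) ^ (j:ℝ) :=
        ENNReal.rpow_le_rpow_of_exponent_le one_le_two (Nat.cast_nonneg j)
  -- the modulus is at most (n+1)⁻¹ * ∫ g^p for each n
  set S : Set (Measure X) := {ν : Measure X |
    ¬ Tendsto (fun j => ∫⁻ x, a j x ∂ν) atTop (nhds 0)} with hS_def
  have key : ∀ n : ℕ, pModulus p μ S ≤ (((n:ℝ≥0∞)) + 1)⁻¹ * ∫⁻ x, g x ^ p ∂μ := by
    intro n
    set cn : ℝ≥0∞ := ((n:ℝ≥0∞) + 1)⁻¹ with hcn_def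
    have hcn0 : cn ≠ 0 := by
      simp [hcn_def, ENNReal.inv_ne_zero,
        ENNReal.add_ne_top.mpr ⟨ENNReal.natCast_ne_top n, one_ne_top⟩]
    have hcn1 : cn ≤ 1 := by
      rw [hcn_def, ENNReal.inv_le_one]
      exact le_add_self
    have hadm : ∀ ν ∈ S, (1:ℝ≥0∞) ≤ ∫⁻ x, cn * g x ∂ν := by
      intro ν hν
      rw [lintegral_const_mul _ hg, hdiv ν hν, ENNReal.mul_top hcn0]
      exact le_top
    have hle : pModulus p μ S ≤ ∫⁻ x, (cn * g x) ^ p ∂μ := by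
      refine iInf_le_of_le (fun x => cn * g x) ?_
      exact iInf_le_of_le ⟨measurable_const.mul hg, hadm⟩ (le_refl _)
    calc pModulus p μ S ≤ ∫⁻ x, (cn * g x) ^ p ∂μ := hle
      _ = cn ^ p * ∫⁻ x, g x ^ p ∂μ := by
          simp_rw [ENNReal.mul_rpow_of_nonneg _ _ hp0.le]
          exact lintegral_const_mul _ (hg.pow_const p)
      _ ≤ cn * ∫⁻ x, g x ^ p ∂μ := by
          refine mul_le_mul_left ?_ _
          have := ENNReal.rpow_le_rpow_of_exponent_ge hcn1 hp
          rwa [ENNReal.rpow_one] at this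
  -- conclude
  have htend : Tendsto (fun n : ℕ => (((n:ℝ≥0∞)) + 1)⁻¹ * ∫⁻ x, g x ^ p ∂μ)
      atTop (nhds 0) := by
    have h1 : Tendsto (fun n : ℕ => ((n:ℝ≥0∞) + 1)⁻¹) atTop (nhds 0) := by
      have h := ENNReal.tendsto_inv_nat_nhds_zero.comp (tendsto_add_atTop_nat 1)
      refine h.congr fun n => ?_
      simp [Function.comp, Nat.cast_add, Nat.cast_one]
    simpa using ENNReal.Tendsto.mul_const h1 (Or.inr hCfin)
  exact le_antisymm (ge_of_tendsto' htend key) zero_le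
end

section
/- Let (X, 𝒜, μ) be a measure space, p ∈ [1, ∞), and let Σ be a family of measures on (X, 𝒜). Then Σ is p-exceptional (i.e. Mod_p(Σ) = 0) if and only if there exists a measurable function f : X → [0, ∞] with ∫_X f^p dμ < ∞ such that ∫_X f dσ = ∞ for every σ ∈ Σ. -/
open MeasureTheory ENNReal Filter

private lemma finMink {X : Type*} [MeasurableSpace X] {μ : Measure X} {p : ℝ} (hp : 1 ≤ p)
    (g : ℕ → X → ℝ≥0∞) (hg : ∀ n, Measurable (g n)) (N : ℕ) :
    (∫⁻ x, (∑ n ∈ Finset.range N, g n x) ^ p ∂μ) ^ (1/p) ≤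
      ∑ n ∈ Finset.range N, (∫⁻ x, g n x ^ p ∂μ) ^ (1/p) := by
  have hp0 : 0 < p := lt_of_lt_of_le one_pos hp
  induction N with
  | zero =>
    simp only [Finset.range_zero, Finset.sum_empty]
    rw [ENNReal.zero_rpow_of_pos hp0, lintegral_zero,
      ENNReal.zero_rpow_of_pos (by positivity : (0:ℝ) < 1/p)]
  | succ N ih =>
    simp only [Finset.sum_range_succ]
    calc (∫⁻ x, (∑ n ∈ Finset.range N, g n x + g N x) ^ p ∂μ) ^ (1/p)
        = (∫⁻ x, (((fun x => ∑ n ∈ Finset.range N, g n x) + g N) x) ^ p ∂μ) ^ (1/p) := rfl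
      _ ≤ (∫⁻ x, (∑ n ∈ Finset.range N, g n x) ^ p ∂μ) ^ (1/p) + (∫⁻ x, g N x ^ p ∂μ) ^ (1/p) :=
          ENNReal.lintegral_Lp_add_le (Finset.measurable_sum _ fun n _ => hg n).aemeasurable
            (hg N).aemeasurable hp
      _ ≤ _ := add_le_add ih le_rfl


/-- Fuglede's characterization of `p`-exceptional families: `Mod_p S = 0` iff there is a
nonnegative `f ∈ L^p(μ)` whose integral over every `σ ∈ S` is infinite. -/
theorem pModulus_eq_zero_iff {X : Type*} [MeasurableSpace X] (p : ℝ) (hp : 1 ≤ p)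
    (μ : MeasureTheory.Measure X) (S : Set (MeasureTheory.Measure X)) :
    pModulus p μ S = 0 ↔
      ∃ f : X → ℝ≥0∞, Measurable f ∧ (∫⁻ x, f x ^ p ∂μ) < ⊤ ∧
        ∀ σ ∈ S, ∫⁻ x, f x ∂σ = ⊤ := by
  have hp0 : 0 < p := lt_of_lt_of_le one_pos hp
  constructor
  · intro h
    -- choose g n admissible with small integral
    have H : ∀ n : ℕ, ∃ g : X → ℝ≥0∞,
        (Measurable g ∧ ∀ ν ∈ S, 1 ≤ ∫⁻ x, g x ∂ν) ∧
        ∫⁻ x, g x ^ p ∂μ < ((2:ℝ≥0∞)⁻¹ ^ n) ^ p := by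
      intro n
      have hc : (0:ℝ≥0∞) < ((2:ℝ≥0∞)⁻¹ ^ n) ^ p := by
        apply ENNReal.rpow_pos (pos_iff_ne_zero.mpr (pow_ne_zero n (by simp)))
        exact pow_ne_top (by simp)
      have h2 : pModulus p μ S < ((2:ℝ≥0∞)⁻¹ ^ n) ^ p := h ▸ hc
      unfold pModulus at h2
      rw [iInf_lt_iff] at h2
      obtain ⟨g, hg⟩ := h2
      rw [iInf_lt_iff] at hg
      obtain ⟨hP, hlt⟩ := hg
      exact ⟨g, hP, hlt⟩
    choose g hP hlt using H
    have hgm : ∀ n, Measurable (g n) := fun n => (hP n).1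
    refine ⟨fun x => ∑' n, g n x, Measurable.ennreal_tsum hgm, ?_, ?_⟩
    · -- finiteness
      have bound : ∀ n, (∫⁻ x, g n x ^ p ∂μ) ^ (1/p) ≤ (2:ℝ≥0∞)⁻¹ ^ n := by
        intro n
        have := ENNReal.rpow_le_rpow (le_of_lt (hlt n)) (by positivity : (0:ℝ) ≤ 1/p)
        rwa [← ENNReal.rpow_mul, mul_one_div_cancel hp0.ne', ENNReal.rpow_one] at this
      have partial_bound : ∀ N, (∫⁻ x, (∑ n ∈ Finset.range N, g n x) ^ p ∂μ) ≤ (2:ℝ≥0∞) ^ p := by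
        intro N
        have h1 : (∫⁻ x, (∑ n ∈ Finset.range N, g n x) ^ p ∂μ) ^ (1/p) ≤ (2:ℝ≥0∞) := by
          refine le_trans (finMink hp g hgm N) ?_
          refine le_trans (Finset.sum_le_sum fun n _ => bound n) ?_
          refine le_trans (ENNReal.sum_le_tsum _) ?_
          rw [ENNReal.tsum_geometric, ENNReal.one_sub_inv_two, inv_inv]
        have := ENNReal.rpow_le_rpow h1 hp0.le
        rwa [← ENNReal.rpow_mul, one_div_mul_cancel hp0.ne', ENNReal.rpow_one] at this
      have hlim : ∀ x, Tendsto (fun N => (∑ n ∈ Finset.range N, g n x) ^ p) atTop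
          (nhds ((∑' n, g n x) ^ p)) :=
        fun x => (ENNReal.continuous_rpow_const.tendsto _).comp (ENNReal.tendsto_nat_tsum _)
      calc ∫⁻ x, (∑' n, g n x) ^ p ∂μ
          = ∫⁻ x, liminf (fun N => (∑ n ∈ Finset.range N, g n x) ^ p) atTop ∂μ := by
            congr 1; funext x; exact ((hlim x).liminf_eq).symm
        _ ≤ liminf (fun N => ∫⁻ x, (∑ n ∈ Finset.range N, g n x) ^ p ∂μ) atTop :=
            lintegral_liminf_le fun N =>
              (Finset.measurable_sum _ fun n _ => hgm n).pow_const p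
        _ ≤ (2:ℝ≥0∞) ^ p := by
            refine liminf_le_of_le (by isBoundedDefault) ?_
            intro b hb
            obtain ⟨N, hN⟩ := hb.exists
            exact hN.trans (partial_bound N)
        _ < ⊤ := ENNReal.rpow_lt_top_of_nonneg hp0.le (by simp)
    · intro σ hσ
      rw [lintegral_tsum fun n => (hgm n).aemeasurable]
      rw [eq_top_iff, ← tsum_const_eq_top_of_ne_zero (α := ℕ) (one_ne_zero (α := ℝ≥0∞))]
      exact ENNReal.tsum_le_tsum fun n => (hP n).2 σ hσ
  · rintro ⟨f, hm, hfin, hinf⟩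
    have key : ∀ n : ℕ, pModulus p μ S ≤ ((2:ℝ≥0∞)⁻¹ ^ n) ^ p * ∫⁻ x, f x ^ p ∂μ := by
      intro n
      set c : ℝ≥0∞ := (2:ℝ≥0∞)⁻¹ ^ n with hc
      have hc0 : c ≠ 0 := by simp [hc]
      refine iInf_le_of_le (fun x => c * f x) (iInf_le_of_le ⟨hm.const_mul c, ?_⟩ ?_)
      · intro ν hν
        rw [lintegral_const_mul c hm, hinf ν hν, ENNReal.mul_top hc0]
        exact le_top
      · rw [← lintegral_const_mul _ (hm.pow_const p)]
        refine le_of_eq (lintegral_congr fun x => ?_)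
        rw [ENNReal.mul_rpow_of_nonneg _ _ hp0.le]
    have htendsto : Tendsto (fun n : ℕ => ((2:ℝ≥0∞)⁻¹ ^ n) ^ p * ∫⁻ x, f x ^ p ∂μ) atTop
        (nhds 0) := by
      have h1 : Tendsto (fun n : ℕ => (2:ℝ≥0∞)⁻¹ ^ n) atTop (nhds 0) :=
        ENNReal.tendsto_pow_atTop_nhds_zero_of_lt_one (by simp [ENNReal.inv_lt_one])
      have h2 : Tendsto (fun n : ℕ => ((2:ℝ≥0∞)⁻¹ ^ n) ^ p) atTop (nhds 0) := by
        have := ((ENNReal.continuous_rpow_const (y := p)).tendsto 0).comp h1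
        rwa [ENNReal.zero_rpow_of_pos hp0] at this
      have := ENNReal.Tendsto.mul_const h2 (Or.inr hfin.ne)
      rwa [zero_mul] at this
    exact le_antisymm (ge_of_tendsto' htendsto key) zero_le
end

section
/- Let (X, 𝒜, μ) be a measure space, p ∈ [1, ∞), and let Σ be a family of measures on (X, 𝒜). Call a measurable f : X → [0, ∞] p-weakly admissible for Σ if ∫_X f dν ≥ 1 holds for p-a.e. ν ∈ Σ. Then Mod_p(Σ) = inf { ∫_X f^p dμ : f p-weakly admissible for Σ }; that is, enlarging the class of competitors from admissible to p-weakly admissible functions does not change the value of the p-modulus. -/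
open MeasureTheory ENNReal

lemma pModulus_empty {X : Type*} [MeasurableSpace X] (p : ℝ) (hp : 1 ≤ p)
    (μ : MeasureTheory.Measure X) : pModulus p μ (∅ : Set (MeasureTheory.Measure X)) = 0 := by
  have hp0 : (0:ℝ) < p := lt_of_lt_of_le one_pos hp
  refine le_antisymm ?_ zero_le
  have h := iInf₂_le (α := ℝ≥0∞) (f := fun (f : X → ℝ≥0∞)
      (_ : Measurable f ∧ ∀ ν ∈ (∅ : Set (MeasureTheory.Measure X)), 1 ≤ ∫⁻ x, f x ∂ν) =>
      ∫⁻ x, f x ^ p ∂μ)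
    (fun _ => (0:ℝ≥0∞)) ⟨measurable_const, fun ν hν => absurd hν (Set.notMem_empty ν)⟩
  simpa [pModulus, ENNReal.zero_rpow_of_pos hp0] using h

theorem pModulus_le_of_weak {X : Type*} [MeasurableSpace X] (p : ℝ) (hp : 1 ≤ p)
    (μ : MeasureTheory.Measure X) (S : Set (MeasureTheory.Measure X))
    (f : X → ℝ≥0∞) (hf : Measurable f)
    (hT : pModulus p μ {ν ∈ S | ¬ 1 ≤ ∫⁻ x, f x ∂ν} = 0) :
    pModulus p μ S ≤ ∫⁻ x, f x ^ p ∂μ := by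
  have hp0 : (0:ℝ) < p := lt_of_lt_of_le one_pos hp
  set A := ∫⁻ x, f x ^ p ∂μ with hA
  by_cases hAtop : A = ∞
  · simp [hAtop]
  have key : ∀ ε : ℝ≥0∞, 0 < ε → pModulus p μ S ^ (1/p) ≤ A ^ (1/p) + ε := by
    intro ε hε
    rcases eq_or_ne ε ∞ with rfl | hεtop
    · simp
    have hεp : (0:ℝ≥0∞) < ε ^ p := ENNReal.rpow_pos hε hεtop
    have hlt : pModulus p μ {ν ∈ S | ¬ 1 ≤ ∫⁻ x, f x ∂ν} < ε ^ p := hT ▸ hεp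
    rw [pModulus, iInf_lt_iff] at hlt
    obtain ⟨g, hg⟩ := hlt
    rw [iInf_lt_iff] at hg
    obtain ⟨⟨hgm, hgadm⟩, hglt⟩ := hg
    have hadm : ∀ ν ∈ S, 1 ≤ ∫⁻ x, f x + g x ∂ν := by
      intro ν hν
      rw [lintegral_add_left hf]
      by_cases h1 : 1 ≤ ∫⁻ x, f x ∂ν
      · exact le_add_right h1
      · exact le_add_left (hgadm ν ⟨hν, h1⟩)
    have h1 : pModulus p μ S ≤ ∫⁻ x, (f x + g x) ^ p ∂μ :=
      iInf₂_le (fun x => f x + g x) ⟨hf.add hgm, hadm⟩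
    have h2 : (∫⁻ x, (f x + g x) ^ p ∂μ) ^ (1/p) ≤
        (∫⁻ x, f x ^ p ∂μ) ^ (1/p) + (∫⁻ x, g x ^ p ∂μ) ^ (1/p) :=
      ENNReal.lintegral_Lp_add_le hf.aemeasurable hgm.aemeasurable hp
    have h3 : (∫⁻ x, g x ^ p ∂μ) ^ (1/p) ≤ ε := by
      have := ENNReal.rpow_le_rpow hglt.le (le_of_lt (by positivity : (0:ℝ) < 1/p))
      rwa [← ENNReal.rpow_mul, mul_one_div_cancel hp0.ne', ENNReal.rpow_one] at this
    calc pModulus p μ S ^ (1/p)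
        ≤ (∫⁻ x, (f x + g x) ^ p ∂μ) ^ (1/p) :=
          ENNReal.rpow_le_rpow h1 (by positivity)
      _ ≤ (∫⁻ x, f x ^ p ∂μ) ^ (1/p) + (∫⁻ x, g x ^ p ∂μ) ^ (1/p) := h2
      _ ≤ A ^ (1/p) + ε := add_le_add le_rfl h3
  have hroot : pModulus p μ S ^ (1/p) ≤ A ^ (1/p) := by
    refine ENNReal.le_of_forall_pos_le_add fun ε hε _ => ?_
    exact key ε (by exact_mod_cast hε)
  have := ENNReal.rpow_le_rpow hroot hp0.le
  rwa [← ENNReal.rpow_mul, ← ENNReal.rpow_mul, one_div_mul_cancel hp0.ne',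
    ENNReal.rpow_one, ENNReal.rpow_one] at this

/-- The `p`-modulus is unchanged when the class of competitors is enlarged from admissible
functions to `p`-weakly admissible functions, i.e. measurable `f` for which the subfamily of
measures `ν ∈ S` with `∫ f dν < 1` is `p`-exceptional. -/
theorem pModulus_eq_inf_weakly_admissible {X : Type*} [MeasurableSpace X] (p : ℝ) (hp : 1 ≤ p)
    (μ : MeasureTheory.Measure X) (S : Set (MeasureTheory.Measure X)) :
    pModulus p μ S =
      ⨅ (f : X → ℝ≥0∞) (_ : Measurable f ∧
          pModulus p μ {ν ∈ S | ¬ 1 ≤ ∫⁻ x, f x ∂ν} = 0),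
        ∫⁻ x, f x ^ p ∂μ := by
  refine le_antisymm ?_ ?_
  · exact le_iInf₂ fun f hf => pModulus_le_of_weak p hp μ S f hf.1 hf.2
  · refine le_iInf₂ fun f hf => iInf₂_le f ⟨hf.1, ?_⟩
    have : {ν ∈ S | ¬ 1 ≤ ∫⁻ x, f x ∂ν} = ∅ := by
      ext ν; simp only [Set.mem_setOf_eq, Set.mem_empty_iff_false, iff_false, not_and, not_not]
      exact fun hν => hf.2 ν hν
    rw [this, pModulus_empty p hp μ]
end

section
/- Let (X, 𝒜, μ) be a measure space, p ∈ [1, ∞), and let Σ, Σ' be families of measures on (X, 𝒜). Write Σ + Σ' = { ν + ν' : ν ∈ Σ, ν' ∈ Σ' }. Then Mod_p(Σ + Σ') ≥ 2^{−p} · min( Mod_p(Σ), Mod_p(Σ') ). In particular, if Σ + Σ' is p-exceptional, then Σ or Σ' is p-exceptional. (This is the measure-theoretic content of the paper's Lemma on sums of families of Lipschitz chains.) -/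
open MeasureTheory ENNReal

/-- For families of measures `S, S'`, the modulus of the family of sums `S + S'` satisfies
`Mod_p(S + S') ≥ 2^{-p} min(Mod_p S, Mod_p S')`; in particular, if `S + S'` is
`p`-exceptional then `S` or `S'` is `p`-exceptional. -/
theorem pModulus_sum_families {X : Type*} [MeasurableSpace X] (p : ℝ) (hp : 1 ≤ p)
    (μ : MeasureTheory.Measure X) (S S' : Set (MeasureTheory.Measure X)) :
    (2 : ℝ≥0∞) ^ (-p) * min (pModulus p μ S) (pModulus p μ S') ≤
        pModulus p μ {m : MeasureTheory.Measure X | ∃ ν ∈ S, ∃ ν' ∈ S', m = ν + ν'} ∧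
      (pModulus p μ {m : MeasureTheory.Measure X | ∃ ν ∈ S, ∃ ν' ∈ S', m = ν + ν'} = 0 →
        pModulus p μ S = 0 ∨ pModulus p μ S' = 0) := by
  have hp0 : (0:ℝ) ≤ p := le_trans zero_le_one hp
  have key : (2 : ℝ≥0∞) ^ (-p) * min (pModulus p μ S) (pModulus p μ S') ≤
      pModulus p μ {m : MeasureTheory.Measure X | ∃ ν ∈ S, ∃ ν' ∈ S', m = ν + ν'} := by
    rw [pModulus]
    refine le_iInf₂ fun f hf => ?_
    obtain ⟨hfm, hadm⟩ := hf
    have h2 : (∀ ν ∈ S, (2:ℝ≥0∞)⁻¹ ≤ ∫⁻ x, f x ∂ν) ∨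
        (∀ ν' ∈ S', (2:ℝ≥0∞)⁻¹ ≤ ∫⁻ x, f x ∂ν') := by
      by_contra h
      push_neg at h
      obtain ⟨⟨ν, hν, hν1⟩, ⟨ν', hν', hν'1⟩⟩ := h
      have h1 := hadm (ν + ν') ⟨ν, hν, ν', hν', rfl⟩
      rw [lintegral_add_measure] at h1
      have hlt : (∫⁻ x, f x ∂ν) + (∫⁻ x, f x ∂ν') < 1 := by
        calc (∫⁻ x, f x ∂ν) + (∫⁻ x, f x ∂ν') < (2:ℝ≥0∞)⁻¹ + (2:ℝ≥0∞)⁻¹ :=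
          ENNReal.add_lt_add hν1 hν'1
        _ = 1 := by
          rw [← two_mul, ENNReal.mul_inv_cancel (by norm_num) (by norm_num)]
      exact absurd h1 (not_le.mpr hlt)
    have hadm2 : ∀ (T : Set (MeasureTheory.Measure X)),
        (∀ ν ∈ T, (2:ℝ≥0∞)⁻¹ ≤ ∫⁻ x, f x ∂ν) →
        pModulus p μ T ≤ ∫⁻ x, ((2:ℝ≥0∞) * f x) ^ p ∂μ := by
      intro T hT
      refine iInf₂_le _ ⟨hfm.const_mul 2, fun ν hν => ?_⟩
      rw [lintegral_const_mul _ hfm]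
      calc (1:ℝ≥0∞) = 2 * 2⁻¹ := by
            rw [ENNReal.mul_inv_cancel (by norm_num) (by norm_num)]
        _ ≤ 2 * ∫⁻ x, f x ∂ν := by gcongr; exact hT ν hν
    have hmin : min (pModulus p μ S) (pModulus p μ S') ≤
        ∫⁻ x, ((2:ℝ≥0∞) * f x) ^ p ∂μ := by
      rcases h2 with h | h
      · exact (min_le_left _ _).trans (hadm2 S h)
      · exact (min_le_right _ _).trans (hadm2 S' h)
    have heq : ∫⁻ x, ((2:ℝ≥0∞) * f x) ^ p ∂μ = (2:ℝ≥0∞) ^ p * ∫⁻ x, f x ^ p ∂μ := by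
      simp_rw [ENNReal.mul_rpow_of_nonneg _ _ hp0]
      exact lintegral_const_mul _ (hfm.pow_const p)
    rw [heq] at hmin
    calc (2 : ℝ≥0∞) ^ (-p) * min (pModulus p μ S) (pModulus p μ S')
        ≤ (2 : ℝ≥0∞) ^ (-p) * ((2:ℝ≥0∞) ^ p * ∫⁻ x, f x ^ p ∂μ) := by gcongr
      _ = ∫⁻ x, f x ^ p ∂μ := by
          rw [← mul_assoc, ← ENNReal.rpow_add _ _ (by norm_num) (by norm_num),
            neg_add_cancel, ENNReal.rpow_zero, one_mul]
  refine ⟨key, fun h0 => ?_⟩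
  rw [h0] at key
  have h2ne : (2 : ℝ≥0∞) ^ (-p) ≠ 0 := by
    simp [ENNReal.rpow_eq_zero_iff]
  have hm0 : min (pModulus p μ S) (pModulus p μ S') = 0 := by
    have := le_antisymm key zero_le
    rcases mul_eq_zero.mp this with h | h
    · exact absurd h h2ne
    · exact h
  rcases min_eq_iff.mp hm0 with ⟨h, _⟩ | ⟨h, _⟩
  · exact Or.inl h
  · exact Or.inr h
end

section
/- Let Ω ⊆ ℝⁿ be open, let σ : Δ_k → Ω be a singular Lipschitz k-simplex, and let ω be a Borel k-form on Ω such that ∫_Ω |ω| dν_σ < ∞. Then for a.e. x ∈ Δ_k the pullback satisfies |(σ*ω)_x(e_1, …, e_k)| ≤ |ω_{σ(x)}| · |J_σ|(x), the pullback σ*ω is integrable over Δ_k, and |∫_σ ω| ≤ ∫_{Δ_k} |(σ*ω)_x(e_1, …, e_k)| dx ≤ ∫_Ω |ω| dν_σ. -/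
open MeasureTheory ENNReal NNReal

noncomputable section

/-- The standard closed `k`-simplex `Δ_k ⊂ ℝᵏ`. -/
def stdSimplexSet (k : ℕ) : Set (EuclideanSpace ℝ (Fin k)) :=
  {x | (∀ i, 0 ≤ x i) ∧ ∑ i, x i ≤ 1}

/-- A continuous `k`-form on (a subset of) `ℝⁿ`, i.e. a field of continuous alternating
`k`-linear maps `(ℝⁿ)ᵏ → ℝ`. -/
abbrev EucForm (n k : ℕ) := ContinuousAlternatingMap ℝ (EuclideanSpace ℝ (Fin n)) ℝ (Fin k)

/-- Operator norm of a continuous alternating form. -/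
def EucForm.opNorm {n k : ℕ} (ω : EucForm n k) : ℝ := ‖ω.toContinuousMultilinearMap‖

/-- The `k`-dimensional Jacobian `|J_σ|(x) = √(det(Dσ(x)ᵀ Dσ(x)))` of a map
`σ : ℝᵏ → ℝⁿ` at `x`, computed from the Fréchet derivative (defined a.e. for Lipschitz
maps by Rademacher's theorem). -/
def jacobian {k n : ℕ} (σ : EuclideanSpace ℝ (Fin k) → EuclideanSpace ℝ (Fin n))
    (x : EuclideanSpace ℝ (Fin k)) : ℝ :=
  Real.sqrt (LinearMap.det
    (LinearMap.adjoint ((fderiv ℝ σ x : EuclideanSpace ℝ (Fin k) →ₗ[ℝ] EuclideanSpace ℝ (Fin n)))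
      ∘ₗ (fderiv ℝ σ x : EuclideanSpace ℝ (Fin k) →ₗ[ℝ] EuclideanSpace ℝ (Fin n)))) 

/-- The surface measure `ν_σ` of a Lipschitz `k`-simplex `σ`: the pushforward under `σ` of
`|J_σ| · (Lebesgue measure restricted to Δ_k)`, so that
`∫ η dν_σ = ∫_{Δ_k} (η ∘ σ) |J_σ|` for Borel `η ≥ 0`. -/
def surfMeasure {k n : ℕ} (σ : EuclideanSpace ℝ (Fin k) → EuclideanSpace ℝ (Fin n)) :
    Measure (EuclideanSpace ℝ (Fin n)) :=
  Measure.map σ ((volume.restrict (stdSimplexSet k)).withDensity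
    fun x => ENNReal.ofReal (jacobian σ x))

/-- The density of the pullback `σ*ω`: the value `(σ*ω)_x(e₁,…,e_k)`, where `e₁,…,e_k` is
the standard basis of `ℝᵏ`.  The integral `∫_σ ω` is the integral of this function over `Δ_k`. -/
def pullbackDensity {k n : ℕ} (σ : EuclideanSpace ℝ (Fin k) → EuclideanSpace ℝ (Fin n))
    (ω : EuclideanSpace ℝ (Fin n) → EucForm n k) (x : EuclideanSpace ℝ (Fin k)) : ℝ :=
  ω (σ x) (fun i => fderiv ℝ σ x (EuclideanSpace.single i 1))

end

set_option maxHeartbeats 1000000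
open scoped RealInnerProductSpace Matrix

noncomputable section Aux
variable {n k : ℕ}

lemma matrix_psd_det_nonneg {k : ℕ} {S : Matrix (Fin k) (Fin k) ℝ} (h : S.PosSemidef) :
    0 ≤ S.det := by
  rw [h.isHermitian.det_eq_prod_eigenvalues]
  exact Finset.prod_nonneg fun i _ => h.eigenvalues_nonneg i

open scoped MatrixOrder in
lemma form_bound {n k : ℕ} (T : EucForm n k)
    (D : EuclideanSpace ℝ (Fin k) →L[ℝ] EuclideanSpace ℝ (Fin n)) :
    |T fun i => D (EuclideanSpace.single i 1)| ≤
      ‖T.toContinuousMultilinearMap‖ *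
        Real.sqrt (LinearMap.det
          (LinearMap.adjoint (D : EuclideanSpace ℝ (Fin k) →ₗ[ℝ] EuclideanSpace ℝ (Fin n))
            ∘ₗ (D : EuclideanSpace ℝ (Fin k) →ₗ[ℝ] EuclideanSpace ℝ (Fin n)))) := by
  classical
  set e : Fin k → EuclideanSpace ℝ (Fin k) := fun i => EuclideanSpace.single i 1 with he
  set Dl : EuclideanSpace ℝ (Fin k) →ₗ[ℝ] EuclideanSpace ℝ (Fin n) := (D : EuclideanSpace ℝ (Fin k) →ₗ[ℝ] EuclideanSpace ℝ (Fin n)) with hDl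
  by_cases hli : LinearIndependent ℝ (fun i => D (e i))
  · -- main case
    set b := EuclideanSpace.basisFun (Fin k) ℝ with hb
    set c := EuclideanSpace.basisFun (Fin n) ℝ with hc
    set G : Matrix (Fin k) (Fin k) ℝ :=
      LinearMap.toMatrix b.toBasis b.toBasis (LinearMap.adjoint Dl ∘ₗ Dl) with hGdef
    have hbe : ∀ i, b.toBasis i = e i := by
      intro i; simp [hb, he, OrthonormalBasis.coe_toBasis]
    have hbb : ∀ i, b i = e i := by intro i; rw [hb, he]; simp
    have hGentry : ∀ i j, G i j = ⟪D (e i), D (e j)⟫ := by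
      intro i j
      rw [hGdef, LinearMap.toMatrix_apply, OrthonormalBasis.coe_toBasis_repr_apply,
        OrthonormalBasis.repr_apply_apply, LinearMap.comp_apply,
        LinearMap.adjoint_inner_right, hbb, hbe]
      simp only [hDl, ContinuousLinearMap.coe_coe]
    have hdet : LinearMap.det (LinearMap.adjoint Dl ∘ₗ Dl) = G.det :=
      (LinearMap.det_toMatrix _ _).symm
    have hG : G.PosSemidef := by
      have : G = (LinearMap.toMatrix b.toBasis c.toBasis Dl)ᴴ *
          (LinearMap.toMatrix b.toBasis c.toBasis Dl) := by
        rw [hGdef, LinearMap.toMatrix_comp _ c.toBasis, LinearMap.toMatrix_adjoint]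
      rw [this]
      exact Matrix.posSemidef_conjTranspose_mul_self _
    set S := CFC.sqrt G with hSdef
    have hS2 : S * S = G := CFC.sqrt_mul_sqrt_self G hG.nonneg
    have hSps : S.PosSemidef := Matrix.nonneg_iff_posSemidef.mp (CFC.sqrt_nonneg G)
    have hSnn : 0 ≤ S.det := matrix_psd_det_nonneg hSps
    -- injectivity
    have hDinj : Function.Injective Dl := by
      rw [← LinearMap.ker_eq_bot]
      rw [LinearMap.ker_eq_bot']
      intro x hx
      have hxr := b.toBasis.sum_repr x
      have : Dl (∑ i, b.toBasis.repr x i • b.toBasis i) = 0 := by rw [hxr]; exact hx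
      rw [map_sum] at this
      simp only [LinearMap.map_smul, hbe, hDl, ContinuousLinearMap.coe_coe] at this
      have hz := Fintype.linearIndependent_iff.mp hli _ this
      rw [← hxr]
      simp only [hz, zero_smul, Finset.sum_const_zero]
    have hdet_ne : LinearMap.det (LinearMap.adjoint Dl ∘ₗ Dl) ≠ 0 := by
      intro h0
      obtain hlt := LinearMap.bot_lt_ker_of_det_eq_zero h0
      obtain ⟨x, hx, hx0⟩ := SetLike.exists_of_lt hlt
      apply hx0
      have hdx : Dl x = 0 := by
        have h1 : ⟪LinearMap.adjoint Dl (Dl x), x⟫ = 0 := by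
          have : (LinearMap.adjoint Dl ∘ₗ Dl) x = 0 := hx
          rw [LinearMap.comp_apply] at this
          rw [this, inner_zero_left]
        rw [LinearMap.adjoint_inner_left] at h1
        exact inner_self_eq_zero.mp h1
      have : Dl x = Dl 0 := by simpa using hdx
      exact hDinj this
    have hGdet_ne : G.det ≠ 0 := by rwa [hdet] at hdet_ne
    have hSS : S.det * S.det = G.det := by rw [← Matrix.det_mul, hS2]
    have hSdet_ne : S.det ≠ 0 := by
      intro h0; apply hGdet_ne; rw [← hSS, h0, zero_mul]
    have hsqrt : Real.sqrt G.det = S.det := by rw [← hSS, Real.sqrt_mul_self hSnn]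
    set A := S⁻¹ with hAdef
    have hSsym : Sᵀ = S := by
      have := hSps.isHermitian
      rwa [Matrix.IsHermitian, Matrix.conjTranspose_eq_transpose_of_trivial] at this
    have hAt : Aᵀ = A := by
      rw [hAdef, Matrix.transpose_nonsing_inv, hSsym]
    have hid : Aᵀ * G * A = 1 := by
      rw [hAt, hAdef, ← hS2, Matrix.mul_assoc, Matrix.mul_assoc,
        Matrix.mul_nonsing_inv _ hSdet_ne.isUnit, Matrix.mul_one,
        Matrix.nonsing_inv_mul _ hSdet_ne.isUnit]
    set v : Fin k → EuclideanSpace ℝ (Fin k) := fun j => ∑ i, A i j • e i with hv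
    have hDv : ∀ j, D (v j) = ∑ i, A i j • D (e i) := by
      intro j
      rw [hv]
      rw [map_sum]
      simp only [ContinuousLinearMap.map_smul]
    have hu_inner : ∀ j, ⟪D (v j), D (v j)⟫ = 1 := by
      intro j
      have h1 : ⟪D (v j), D (v j)⟫ = (Aᵀ * G * A) j j := by
        rw [hDv]
        simp only [sum_inner, inner_sum, real_inner_smul_left, real_inner_smul_right,
          Matrix.mul_apply, Matrix.transpose_apply]
        rw [Finset.sum_comm]
        refine Finset.sum_congr rfl fun i' _ => ?_
        rw [Finset.sum_mul]
        refine Finset.sum_congr rfl fun i _ => ?_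
        rw [hGentry, real_inner_comm]
        ring
      rw [h1, hid, Matrix.one_apply_eq]
    have hu_norm : ∀ j, ‖D (v j)‖ = 1 := by
      intro j
      have h1 := hu_inner j
      rw [real_inner_self_eq_norm_mul_norm] at h1
      nlinarith [norm_nonneg (D (v j))]
    set F := T.toAlternatingMap.compLinearMap Dl with hF
    have hFsmul := F.eq_smul_basis_det b.toBasis
    have hFv : F v = b.toBasis.det v * F ⇑b.toBasis := by
      conv_lhs => rw [hFsmul]
      simp [mul_comm]
    have hdetv : b.toBasis.det v = A.det := by
      rw [Module.Basis.det_apply]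
      suffices h : b.toBasis.toMatrix v = A by rw [h]
      ext i j
      have hvj : v j = ∑ i', A i' j • b.toBasis i' := by
        rw [hv]
        exact Finset.sum_congr rfl fun i' _ => by rw [hbe]
      rw [Module.Basis.toMatrix_apply, hvj, Module.Basis.repr_sum_self]
    have hFb : F ⇑b.toBasis = T fun i => D (e i) := by
      rw [hF, AlternatingMap.compLinearMap_apply]
      have h2 : (fun i => Dl (b.toBasis i)) = fun i => D (e i) := by
        funext i
        rw [hbe, hDl]
        rfl
      rw [h2]
      rfl
    have hAT : A.det = S.det⁻¹ := by rw [hAdef, Matrix.det_nonsing_inv, Ring.inverse_eq_inv']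
    have hFvb : T (fun i => D (e i)) = S.det * F v := by
      rw [hFv, hdetv, hAT, hFb]
      field_simp
    have hFvval : F v = T fun j => D (v j) := by
      rw [hF, AlternatingMap.compLinearMap_apply]
      rw [ContinuousAlternatingMap.coe_toAlternatingMap]
      simp only [hDl, ContinuousLinearMap.coe_coe]
    have hbound : |F v| ≤ ‖T.toContinuousMultilinearMap‖ := by
      rw [hFvval]
      have h2 := T.toContinuousMultilinearMap.le_opNorm fun j => D (v j)
      simp only [Real.norm_eq_abs] at h2
      calc |T fun j => D (v j)| ≤ ‖T.toContinuousMultilinearMap‖ * ∏ j, ‖D (v j)‖ := h2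
        _ = ‖T.toContinuousMultilinearMap‖ := by simp [hu_norm]
    rw [hFvb, hdet, hsqrt, abs_mul, abs_of_nonneg hSnn]
    calc S.det * |F v| ≤ S.det * ‖T.toContinuousMultilinearMap‖ :=
          mul_le_mul_of_nonneg_left hbound hSnn
      _ = ‖T.toContinuousMultilinearMap‖ * S.det := mul_comm _ _
  · have h0 : (T fun i => D (e i)) = 0 := by
      have := T.toAlternatingMap.map_linearDependent (fun i => D (e i)) hli
      simpa using this
    rw [h0]
    simp only [abs_zero]
    positivity

lemma measurable_stdSimplexSet : MeasurableSet (stdSimplexSet k) := by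
  apply IsClosed.measurableSet
  have h1 : IsClosed {x : EuclideanSpace ℝ (Fin k) | ∀ i, 0 ≤ x i} := by
    have : {x : EuclideanSpace ℝ (Fin k) | ∀ i, 0 ≤ x i} =
        ⋂ i, {x : EuclideanSpace ℝ (Fin k) | 0 ≤ x i} := by
      ext x; simp
    rw [this]
    exact isClosed_iInter fun i =>
      isClosed_le continuous_const (EuclideanSpace.proj (𝕜 := ℝ) i).continuous
  have h2 : IsClosed {x : EuclideanSpace ℝ (Fin k) | ∑ i, x i ≤ 1} :=
    isClosed_le (continuous_finset_sum _ fun i _ =>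
      (EuclideanSpace.proj (𝕜 := ℝ) i).continuous) continuous_const
  exact h1.inter h2

lemma jacobian_eq_clm (σ : EuclideanSpace ℝ (Fin k) → EuclideanSpace ℝ (Fin n))
    (x : EuclideanSpace ℝ (Fin k)) :
    jacobian σ x = Real.sqrt
      (((ContinuousLinearMap.adjoint (fderiv ℝ σ x)).comp (fderiv ℝ σ x)).det) := by
  rfl

lemma measurable_jacobian (σ : EuclideanSpace ℝ (Fin k) → EuclideanSpace ℝ (Fin n)) :
    Measurable (jacobian σ) := by
  have h1 : Measurable (fun x => fderiv ℝ σ x) := measurable_fderiv ℝ σ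
  have h2 : Continuous (fun D : EuclideanSpace ℝ (Fin k) →L[ℝ] EuclideanSpace ℝ (Fin n) =>
      Real.sqrt (((ContinuousLinearMap.adjoint D).comp D).det)) := by
    apply Real.continuous_sqrt.comp
    apply ContinuousLinearMap.continuous_det.comp
    exact Continuous.clm_comp (ContinuousLinearMap.adjoint :
      (EuclideanSpace ℝ (Fin k) →L[ℝ] EuclideanSpace ℝ (Fin n)) ≃ₗᵢ⋆[ℝ] _).continuous continuous_id
  have : jacobian σ = fun x => Real.sqrt
      (((ContinuousLinearMap.adjoint (fderiv ℝ σ x)).comp (fderiv ℝ σ x)).det) := by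
    funext x; exact jacobian_eq_clm σ x
  rw [this]
  exact h2.measurable.comp h1

lemma stronglyMeasurable_pullbackDensity
    (σ : EuclideanSpace ℝ (Fin k) → EuclideanSpace ℝ (Fin n)) (hσc : Continuous σ)
    (ω : EuclideanSpace ℝ (Fin n) → EucForm n k) (hω : StronglyMeasurable ω) :
    StronglyMeasurable (pullbackDensity σ ω) := by
  have h1 : StronglyMeasurable (fun x => (ω (σ x)).toContinuousMultilinearMap) := by
    exact (ContinuousAlternatingMap.continuous_toContinuousMultilinearMap).comp_stronglyMeasurable
      (hω.comp_measurable hσc.measurable)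
  have h2 : StronglyMeasurable (fun x => fderiv ℝ σ x) :=
    (measurable_fderiv ℝ σ).stronglyMeasurable
  have h3 : Continuous (fun p :
      (ContinuousMultilinearMap ℝ (fun _ : Fin k => EuclideanSpace ℝ (Fin n)) ℝ) ×
        (EuclideanSpace ℝ (Fin k) →L[ℝ] EuclideanSpace ℝ (Fin n)) =>
      p.1 (fun i => p.2 (EuclideanSpace.single i 1))) := by
    have hargs : Continuous (fun p :
        (ContinuousMultilinearMap ℝ (fun _ : Fin k => EuclideanSpace ℝ (Fin n)) ℝ) ×
          (EuclideanSpace ℝ (Fin k) →L[ℝ] EuclideanSpace ℝ (Fin n)) =>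
        (fun i : Fin k => p.2 (EuclideanSpace.single i 1))) := by
      refine continuous_pi fun i => ?_
      have hev1 : Continuous fun q : (EuclideanSpace ℝ (Fin k) →L[ℝ] EuclideanSpace ℝ (Fin n)) ×
          EuclideanSpace ℝ (Fin k) => q.1 q.2 := isBoundedBilinearMap_apply.continuous
      exact hev1.comp (continuous_snd.prodMk continuous_const)
    have hev2 : Continuous fun q :
        (ContinuousMultilinearMap ℝ (fun _ : Fin k => EuclideanSpace ℝ (Fin n)) ℝ) ×
          (Fin k → EuclideanSpace ℝ (Fin n)) => q.1 q.2 := ContinuousEval.continuous_eval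
    exact hev2.comp (continuous_fst.prodMk hargs)
  exact h3.comp_stronglyMeasurable (h1.prodMk h2)

end Aux

/-- For a singular Lipschitz `k`-simplex `σ : Δ_k → Ω` and a Borel `k`-form `ω` on `Ω` with
`∫_Ω |ω| dν_σ < ∞`: a.e. on `Δ_k` the pullback density is bounded by `|ω_{σ(x)}| |J_σ|(x)`,
the pullback is integrable over `Δ_k`, and
`|∫_σ ω| ≤ ∫_{Δ_k} |σ*ω| ≤ ∫_Ω |ω| dν_σ`. -/
theorem pullback_integrable_and_bound {n k : ℕ}
    (Ω : Set (EuclideanSpace ℝ (Fin n))) (hΩ : IsOpen Ω)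
    (σ : EuclideanSpace ℝ (Fin k) → EuclideanSpace ℝ (Fin n))
    (L : ℝ≥0) (hσ : LipschitzWith L σ)
    (hmaps : ∀ x ∈ stdSimplexSet k, σ x ∈ Ω)
    (ω : EuclideanSpace ℝ (Fin n) → EucForm n k)
    (hω : StronglyMeasurable ω)
    (hint : (∫⁻ y in Ω, ENNReal.ofReal (ω y).opNorm ∂(surfMeasure σ)) < ⊤) :
    (∀ᵐ x ∂(volume.restrict (stdSimplexSet k)),
        |pullbackDensity σ ω x| ≤ (ω (σ x)).opNorm * jacobian σ x) ∧
    IntegrableOn (pullbackDensity σ ω) (stdSimplexSet k) ∧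
    |∫ x in stdSimplexSet k, pullbackDensity σ ω x| ≤
      ∫ x in stdSimplexSet k, |pullbackDensity σ ω x| ∧
    ∫ x in stdSimplexSet k, |pullbackDensity σ ω x| ≤
      (∫⁻ y in Ω, ENNReal.ofReal (ω y).opNorm ∂(surfMeasure σ)).toReal := by
  classical
  have hσc : Continuous σ := hσ.continuous
  have hptwise : ∀ x, |pullbackDensity σ ω x| ≤ (ω (σ x)).opNorm * jacobian σ x := by
    intro x
    exact form_bound (ω (σ x)) (fderiv ℝ σ x)
  have hf_meas : StronglyMeasurable (pullbackDensity σ ω) :=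
    stronglyMeasurable_pullbackDensity σ hσc ω hω
  have hjac : Measurable fun x => ENNReal.ofReal (jacobian σ x) :=
    ENNReal.measurable_ofReal.comp (measurable_jacobian σ)
  have hopnorm : StronglyMeasurable fun y => (ω y).opNorm := by
    have h1 : StronglyMeasurable (fun y => (ω y).toContinuousMultilinearMap) :=
      (ContinuousAlternatingMap.continuous_toContinuousMultilinearMap).comp_stronglyMeasurable hω
    exact h1.norm
  have hη : Measurable fun y => ENNReal.ofReal (ω y).opNorm :=
    ENNReal.measurable_ofReal.comp hopnorm.measurable
  have hkey : (∫⁻ x in stdSimplexSet k, ENNReal.ofReal |pullbackDensity σ ω x| ∂volume) ≤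
      ∫⁻ y in Ω, ENNReal.ofReal (ω y).opNorm ∂(surfMeasure σ) := by
    rw [surfMeasure]
    rw [← lintegral_indicator hΩ.measurableSet]
    rw [lintegral_map (hη.indicator hΩ.measurableSet) hσc.measurable]
    have hg : Measurable fun a => Ω.indicator (fun y => ENNReal.ofReal (ω y).opNorm) (σ a) :=
      (hη.indicator hΩ.measurableSet).comp hσc.measurable
    rw [lintegral_withDensity_eq_lintegral_mul _ hjac hg]
    refine lintegral_mono_ae ?_
    filter_upwards [ae_restrict_mem measurable_stdSimplexSet] with x hx
    have hmem : σ x ∈ Ω := hmaps x hx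
    simp only [Pi.mul_apply, Function.comp_apply, Set.indicator_of_mem hmem]
    calc ENNReal.ofReal |pullbackDensity σ ω x|
        ≤ ENNReal.ofReal ((ω (σ x)).opNorm * jacobian σ x) :=
          ENNReal.ofReal_le_ofReal (hptwise x)
      _ = ENNReal.ofReal (jacobian σ x) * ENNReal.ofReal (ω (σ x)).opNorm := by
          have h0 : 0 ≤ (ω (σ x)).opNorm := by unfold EucForm.opNorm; positivity
          rw [ENNReal.ofReal_mul h0, mul_comm]
  have hfin : (∫⁻ x in stdSimplexSet k, ENNReal.ofReal |pullbackDensity σ ω x| ∂volume) < ⊤ :=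
    lt_of_le_of_lt hkey hint
  have hInt : IntegrableOn (pullbackDensity σ ω) (stdSimplexSet k) := by
    refine ⟨hf_meas.aestronglyMeasurable, ?_⟩
    rw [hasFiniteIntegral_iff_norm]
    simpa only [Real.norm_eq_abs] using hfin
  have habs : (∫ x in stdSimplexSet k, |pullbackDensity σ ω x|) =
      (∫⁻ x in stdSimplexSet k, ENNReal.ofReal |pullbackDensity σ ω x| ∂volume).toReal := by
    have hmeasabs : AEStronglyMeasurable (fun x => |pullbackDensity σ ω x|)
        (volume.restrict (stdSimplexSet k)) := by
      simpa only [Real.norm_eq_abs] using hf_meas.aestronglyMeasurable.norm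
    rw [integral_eq_lintegral_of_nonneg_ae (Filter.Eventually.of_forall fun x => abs_nonneg _)
      hmeasabs]
  refine ⟨Filter.Eventually.of_forall hptwise, hInt, ?_, ?_⟩
  · have := norm_integral_le_integral_norm (μ := volume.restrict (stdSimplexSet k))
      (pullbackDensity σ ω)
    simpa only [Real.norm_eq_abs] using this
  · rw [habs]
    exact ENNReal.toReal_mono hint.ne hkey
end

section
/- Let Ω, Υ ⊆ ℝⁿ be open, let L ≥ 1, and let f : Ω → Υ be an L-bilipschitz homeomorphism (L^{−1}|x − y| ≤ |f(x) − f(y)| ≤ L|x − y| for all x, y ∈ Ω). Let p ∈ [1, ∞), 0 ≤ k ≤ n, and let ω be a measurable k-form on Υ. Define the pullback f*ω a.e. on Ω by (f*ω)_x(v_1, …, v_k) = ω_{f(x)}(Df(x)v_1, …, Df(x)v_k), where Df(x) is the a.e.-defined Rademacher derivative of f. Then ∫_Ω |f*ω|^p dx ≤ L^{n+kp} ∫_{f(Ω)} |ω|^p dx. -/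
open MeasureTheory ENNReal NNReal

noncomputable section

/-- The pullback `f*ω` of a measurable `k`-form under a Lipschitz map `f : ℝⁿ → ℝⁿ`,
defined a.e. via the Rademacher derivative: `(f*ω)_x = ω_{f(x)} ∘ (Df(x), …, Df(x))`. -/
def formPullback {n k : ℕ} (f : EuclideanSpace ℝ (Fin n) → EuclideanSpace ℝ (Fin n))
    (ω : EuclideanSpace ℝ (Fin n) → EucForm n k) (x : EuclideanSpace ℝ (Fin n)) :
    EucForm n k :=
  (ω (f x)).compContinuousLinearMap (fderiv ℝ f x)

/-!
Since `f` is `L`-Lipschitz on the open set `Ω`, its derivative has norm at most `L` wherever it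
exists, so `|f*ω|(x) ≤ Lᵏ |ω(f x)|`. Since `f⁻¹` is `L`-Lipschitz on `f(Ω)` and Lipschitz maps
scale Lebesgue measure (a multiple of the `n`-dimensional Hausdorff measure) by at most `Lⁿ`,
pushing Lebesgue measure on `Ω` forward by `f` gives at most `Lⁿ` times Lebesgue measure on
`f(Ω)`, i.e. `∫_Ω h ∘ f ≤ Lⁿ ∫_{f(Ω)} h` for every measurable `h ≥ 0`.
-/

open Module Set Topology

theorem LipschitzOnWith.euclideanHausdorffMeasure_image_le {X Y : Type*} [EMetricSpace X]
    [MeasurableSpace X] [BorelSpace X] [EMetricSpace Y] [MeasurableSpace Y] [BorelSpace Y]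
    {K : ℝ≥0} {f : X → Y} {s : Set X} (hf : LipschitzOnWith K f s) (d : ℕ) :
    μHE[d] (f '' s) ≤ (K : ℝ≥0∞) ^ d * μHE[d] s := by
  simp only [Measure.euclideanHausdorffMeasure_def, Measure.smul_apply, ENNReal.smul_def,
    smul_eq_mul, ← ENNReal.rpow_natCast]
  rw [mul_left_comm]
  gcongr
  exact hf.hausdorffMeasure_image_le d.cast_nonneg

section VolumeUnderLipschitz

variable {V : Type*} [NormedAddCommGroup V] [InnerProductSpace ℝ V] [FiniteDimensional ℝ V]
  [MeasurableSpace V] [BorelSpace V] {K : ℝ≥0} {f : V → V} {s : Set V}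

theorem LipschitzOnWith.volume_image_le (hf : LipschitzOnWith K f s) :
    (volume : Measure V) (f '' s) ≤ (K : ℝ≥0∞) ^ finrank ℝ V * volume s := by
  simpa only [InnerProductSpace.euclideanHausdorffMeasure_eq_volume] using
    hf.euclideanHausdorffMeasure_image_le (finrank ℝ V)

theorem AntilipschitzWith.volume_le_mul_volume_image
    (hf : AntilipschitzWith K (s.domRestrict f)) :
    (volume : Measure V) s ≤ (K : ℝ≥0∞) ^ finrank ℝ V * volume (f '' s) := by
  have hinj : InjOn f s := injOn_iff_injective.2 hf.injective
  have hinv : LipschitzOnWith K (Function.invFunOn f s) (f '' s) :=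
    lipschitzOnWith_iff_restrict.2 <|
      hf.to_rightInvOn' (surjOn_image f s).mapsTo_invFunOn
        (surjOn_image f s).rightInvOn_invFunOn
  calc volume s ≤ volume (Function.invFunOn f s '' (f '' s)) :=
        measure_mono (hinj.leftInvOn_invFunOn.image_image).ge
    _ ≤ _ := hinv.volume_image_le

theorem AntilipschitzWith.map_volume_restrict_le (hs : MeasurableSet s)
    (hf : AntilipschitzWith K (s.domRestrict f)) (hfm : AEMeasurable f (volume.restrict s)) :
    (volume.restrict s).map f ≤
      ((K : ℝ≥0∞) ^ finrank ℝ V) • volume.restrict (f '' s) := by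
  refine Measure.le_iff.2 fun A hA => ?_
  rw [Measure.map_apply_of_aemeasurable hfm hA, Measure.restrict_apply' hs, Measure.smul_apply,
    smul_eq_mul, Measure.restrict_apply hA]
  have hsub : AntilipschitzWith K ((f ⁻¹' A ∩ s).domRestrict f) :=
    fun x y => hf ⟨x, x.2.2⟩ ⟨y, y.2.2⟩
  calc volume (f ⁻¹' A ∩ s) ≤ _ := hsub.volume_le_mul_volume_image
    _ ≤ _ := by
      gcongr
      rintro _ ⟨x, hx, rfl⟩
      exact ⟨hx.1, mem_image_of_mem f hx.2⟩

theorem AntilipschitzWith.setLIntegral_comp_le (hs : MeasurableSet s)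
    (hf : AntilipschitzWith K (s.domRestrict f)) (hfm : AEMeasurable f (volume.restrict s))
    {g : V → ℝ≥0∞} (hg : Measurable g) :
    ∫⁻ x in s, g (f x) ≤ (K : ℝ≥0∞) ^ finrank ℝ V * ∫⁻ y in f '' s, g y := by
  rw [← lintegral_map' hg.aemeasurable hfm, ← smul_eq_mul, ← lintegral_smul_measure]
  exact lintegral_mono' (hf.map_volume_restrict_le hs hfm) le_rfl

end VolumeUnderLipschitz

section Pullback

variable {n k : ℕ} {f : EuclideanSpace ℝ (Fin n) → EuclideanSpace ℝ (Fin n)}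
  {ω : EuclideanSpace ℝ (Fin n) → EucForm n k} {K : ℝ≥0}
  {s : Set (EuclideanSpace ℝ (Fin n))} {x : EuclideanSpace ℝ (Fin n)}

theorem opNorm_formPullback_le (hs : s ∈ 𝓝 x) (hf : LipschitzOnWith K f s) :
    (formPullback f ω x).opNorm ≤ K ^ k * (ω (f x)).opNorm :=
  calc (formPullback f ω x).opNorm
      ≤ (ω (f x)).opNorm * ‖fderiv ℝ f x‖ ^ Fintype.card (Fin k) :=
        ContinuousAlternatingMap.norm_compContinuousLinearMap_le _ _
    _ ≤ (ω (f x)).opNorm * K ^ k := by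
        rw [Fintype.card_fin]
        gcongr
        · exact norm_nonneg _
        · exact norm_fderiv_le_of_lipschitzOn ℝ hs hf
    _ = K ^ k * (ω (f x)).opNorm := mul_comm _ _

theorem ofReal_opNorm_formPullback_rpow_le (hs : s ∈ 𝓝 x) (hf : LipschitzOnWith K f s)
    {p : ℝ} (hp : 0 ≤ p) :
    ENNReal.ofReal (formPullback f ω x).opNorm ^ p ≤
      (K : ℝ≥0∞) ^ ((k : ℝ) * p) * ENNReal.ofReal (ω (f x)).opNorm ^ p := by
  grw [opNorm_formPullback_le hs hf, ENNReal.ofReal_mul (by positivity),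
    ENNReal.ofReal_pow K.coe_nonneg, ENNReal.ofReal_coe_nnreal, ENNReal.mul_rpow_of_nonneg _ _ hp,
    ← ENNReal.rpow_natCast, ← ENNReal.rpow_mul]

end Pullback

theorem pullback_Lp_estimate_general {n k : ℕ}
    (Ω : Set (EuclideanSpace ℝ (Fin n))) (hΩ : IsOpen Ω)
    (L : ℝ) (hL : 1 ≤ L)
    (f : EuclideanSpace ℝ (Fin n) → EuclideanSpace ℝ (Fin n))
    (hbilip : ∀ x ∈ Ω, ∀ y ∈ Ω,
      L⁻¹ * dist x y ≤ dist (f x) (f y) ∧ dist (f x) (f y) ≤ L * dist x y)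
    (p : ℝ) (hp : 1 ≤ p)
    (ω : EuclideanSpace ℝ (Fin n) → EucForm n k) (hω : StronglyMeasurable ω) :
    ∫⁻ x in Ω, ENNReal.ofReal ((formPullback f ω x).opNorm) ^ p ≤
      ENNReal.ofReal (L ^ ((n : ℝ) + k * p)) *
        ∫⁻ y in f '' Ω, ENNReal.ofReal ((ω y).opNorm) ^ p := by
  have hL0 : 0 < L := zero_lt_one.trans_le hL
  have hp0 : 0 ≤ p := zero_le_one.trans hp
  set K : ℝ≥0 := L.toNNReal
  have hK : (K : ℝ) = L := Real.coe_toNNReal L hL0.le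
  have hK0 : (K : ℝ≥0∞) ≠ 0 := by simpa [K] using hL0
  have hKp : (K : ℝ≥0∞) ^ ((k : ℝ) * p) ≠ ∞ :=
    ENNReal.rpow_ne_top_of_nonneg (by positivity) ENNReal.coe_ne_top
  have hlip : LipschitzOnWith K f Ω :=
    .of_dist_le_mul fun x hx y hy => hK ▸ (hbilip x hx y hy).2
  have hantilip : AntilipschitzWith K (Ω.domRestrict f) :=
    .of_le_mul_dist fun x y => hK ▸ (inv_mul_le_iff₀ hL0).1 (hbilip x x.2 y y.2).1
  set g : EuclideanSpace ℝ (Fin n) → ℝ≥0∞ := fun y => ENNReal.ofReal (ω y).opNorm ^ p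
  have hg : Measurable g := hω.norm.measurable.ennreal_ofReal.pow_const p
  calc ∫⁻ x in Ω, ENNReal.ofReal (formPullback f ω x).opNorm ^ p
      ≤ ∫⁻ x in Ω, (K : ℝ≥0∞) ^ ((k : ℝ) * p) * g (f x) :=
        setLIntegral_mono' hΩ.measurableSet fun x hx =>
          ofReal_opNorm_formPullback_rpow_le (hΩ.mem_nhds hx) hlip hp0
    _ = (K : ℝ≥0∞) ^ ((k : ℝ) * p) * ∫⁻ x in Ω, g (f x) :=
        lintegral_const_mul' _ _ hKp
    _ ≤ (K : ℝ≥0∞) ^ ((k : ℝ) * p) * (K ^ n * ∫⁻ y in f '' Ω, g y) := by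
        grw [hantilip.setLIntegral_comp_le hΩ.measurableSet
          (hlip.continuousOn.aemeasurable hΩ.measurableSet) hg, finrank_euclideanSpace_fin]
    _ = ENNReal.ofReal (L ^ ((n : ℝ) + k * p)) * ∫⁻ y in f '' Ω, g y := by
        rw [← mul_assoc, ← ENNReal.rpow_natCast,
          ← ENNReal.rpow_add _ _ hK0 ENNReal.coe_ne_top, add_comm,
          ← ENNReal.ofReal_rpow_of_pos hL0]
        rfl

/-- For an `L`-bilipschitz homeomorphism `f : Ω → Υ` between open subsets of `ℝⁿ` and a
measurable `k`-form `ω` on `Υ`, the pullback satisfies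
`∫_Ω |f*ω|^p ≤ L^{n+kp} ∫_{f(Ω)} |ω|^p`. -/
theorem pullback_Lp_estimate {n k : ℕ} (hkn : k ≤ n)
    (Ω Υ : Set (EuclideanSpace ℝ (Fin n))) (hΩ : IsOpen Ω) (hΥ : IsOpen Υ)
    (L : ℝ) (hL : 1 ≤ L)
    (f : EuclideanSpace ℝ (Fin n) → EuclideanSpace ℝ (Fin n))
    (hbilip : ∀ x ∈ Ω, ∀ y ∈ Ω,
      L⁻¹ * dist x y ≤ dist (f x) (f y) ∧ dist (f x) (f y) ≤ L * dist x y)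
    (himage : f '' Ω = Υ)
    (p : ℝ) (hp : 1 ≤ p)
    (ω : EuclideanSpace ℝ (Fin n) → EucForm n k) (hω : StronglyMeasurable ω) :
    ∫⁻ x in Ω, ENNReal.ofReal ((formPullback f ω x).opNorm) ^ p ≤
      ENNReal.ofReal (L ^ ((n : ℝ) + k * p)) *
        ∫⁻ y in f '' Ω, ENNReal.ofReal ((ω y).opNorm) ^ p :=
  pullback_Lp_estimate_general Ω hΩ L hL f hbilip p hp ω hω

end
end
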